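/- arXiv:2605.19573 — 2 statements merged into one kernel-verified Lean document; each statement's English description precedes it below -/
import Mathlib

section
/- Assume W(y|x) > 0 for all x,y and P_X(x) > 0 for all x. For every τ > τ*(R) := max(I(X;Y)−R, 0), E_MD(τ,R) = 0. Specifically, there exist joint pmfs Q with X-marginal P_X, λ(Q,R) < τ, and D(Q_{Y|X}‖W|P_X) arbitrarily small (e.g., convex combinations Q_ε = (1−ε)(P_X⊗W) + ε Q₀ approaching P_X⊗W, using continuity of λ and of the conditional divergence at P_X⊗W and λ(P_X⊗W,R) = τ*(R) < τ). -/
open scoped BigOperators ENNReal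
open Finset

noncomputable section

variable {X Y : Type*} [Fintype X] [Fintype Y]

/-- X-marginal of a joint distribution on `X × Y`. -/
def margX (Q : X → Y → ℝ) (x : X) : ℝ := ∑ y, Q x y

/-- Y-marginal of a joint distribution on `X × Y`. -/
def margY (Q : X → Y → ℝ) (y : Y) : ℝ := ∑ x, Q x y

/-- Output marginal `P_Y` induced by input distribution `PX` and channel `W`. -/
def outP (PX : X → ℝ) (W : X → Y → ℝ) (y : Y) : ℝ := ∑ x, PX x * W x y

/-- `Q` is a joint pmf on `X × Y`. -/
def IsJointPmf (Q : X → Y → ℝ) : Prop := (∀ x y, 0 ≤ Q x y) ∧ ∑ x, ∑ y, Q x y = 1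

/-- `p` is a pmf. -/
def IsPmf {Z : Type*} [Fintype Z] (p : Z → ℝ) : Prop := (∀ z, 0 ≤ p z) ∧ ∑ z, p z = 1

/-- `W` is a channel: each row `W x ·` is a pmf on `Y`. -/
def IsChannel (W : X → Y → ℝ) : Prop := ∀ x, (∀ y, 0 ≤ W x y) ∧ ∑ y, W x y = 1

/-- Marginal KL divergence `D_m(Q_Y) = D(Q_Y ‖ P_Y)`. -/
def Dm (PX : X → ℝ) (W : X → Y → ℝ) (Q : X → Y → ℝ) : ℝ :=
  ∑ y, margY Q y * Real.log (margY Q y / outP PX W y)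

/-- Conditional KL divergence `D_c(Q) = D(Q_{Y|X} ‖ W | P_X) = D(Q ‖ P_X ⊗ W)`
(for `Q` with X-marginal `P_X`). -/
def Dc (PX : X → ℝ) (W : X → Y → ℝ) (Q : X → Y → ℝ) : ℝ :=
  ∑ x, ∑ y, Q x y * Real.log (Q x y / (PX x * W x y))

/-- Mutual information `I_Q(X;Y)` of the joint distribution `Q`. -/
def MI (Q : X → Y → ℝ) : ℝ :=
  ∑ x, ∑ y, Q x y * Real.log (Q x y / (margX Q x * margY Q y))

/-- `λ(Q,R) = D_m(Q_Y) − D_c(Q) + [I_Q(X;Y) − R]₊`. -/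
def lam (PX : X → ℝ) (W : X → Y → ℝ) (R : ℝ) (Q : X → Y → ℝ) : ℝ :=
  Dm PX W Q - Dc PX W Q + max (MI Q - R) 0

/-- False-alarm exponent `E_FA(τ,R)`: infimum (in extended reals, `⊤` on the empty set)
of `D_m(Q_Y) + [I_Q(X;Y) − R]₊` over joint pmfs `Q` with X-marginal `P_X` and `λ(Q,R) ≥ τ`. -/
def EFA (PX : X → ℝ) (W : X → Y → ℝ) (R τ : ℝ) : ℝ≥0∞ :=
  ⨅ Q ∈ {Q : X → Y → ℝ | IsJointPmf Q ∧ margX Q = PX ∧ τ ≤ lam PX W R Q},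
    ENNReal.ofReal (Dm PX W Q + max (MI Q - R) 0)

/-- Missed-detection exponent `E_MD(τ,R)`: infimum (in extended reals, `⊤` on the empty set)
of `D_c(Q)` over joint pmfs `Q` with X-marginal `P_X` and `λ(Q,R) < τ`. -/
def EMD (PX : X → ℝ) (W : X → Y → ℝ) (R τ : ℝ) : ℝ≥0∞ :=
  ⨅ Q ∈ {Q : X → Y → ℝ | IsJointPmf Q ∧ margX Q = PX ∧ lam PX W R Q < τ},
    ENNReal.ofReal (Dc PX W Q)

/-!
The joint distribution `P_X ⊗ W` itself is admissible for `E_MD(τ,R)`: its X-marginal is `P_X`,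
both divergences `D(Q_Y‖P_Y)` and `D(Q_{Y|X}‖W|P_X)` vanish at it, so `λ(P_X ⊗ W, R) = τ*(R) < τ`,
and it contributes the value `0` to the infimum.
-/

section JointOfChannel

variable {PX : X → ℝ} {W : X → Y → ℝ}

theorem isJointPmf_mul_channel (hPX : IsPmf PX) (hW : IsChannel W) :
    IsJointPmf (fun x y => PX x * W x y) := by
  refine ⟨fun x y => mul_nonneg (hPX.1 x) ((hW x).1 y), ?_⟩
  simp only [← mul_sum, (hW _).2, mul_one, hPX.2]

omit [Fintype X] in
theorem margX_mul_channel (hW : IsChannel W) : margX (fun x y => PX x * W x y) = PX := by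
  funext x
  simp only [margX, ← mul_sum, (hW x).2, mul_one]

omit [Fintype Y] in
theorem margY_mul_channel : margY (fun x y => PX x * W x y) = outP PX W := rfl

theorem Dm_mul_channel : Dm PX W (fun x y => PX x * W x y) = 0 :=
  sum_eq_zero fun y _ => by rw [margY_mul_channel, Real.log_div_self, mul_zero]

theorem Dc_mul_channel : Dc PX W (fun x y => PX x * W x y) = 0 :=
  sum_eq_zero fun x _ => sum_eq_zero fun y _ => by rw [Real.log_div_self, mul_zero]

theorem lam_mul_channel (R : ℝ) :
    lam PX W R (fun x y => PX x * W x y) = max (MI (fun x y => PX x * W x y) - R) 0 := by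
  rw [lam, Dm_mul_channel, Dc_mul_channel, sub_zero, zero_add]

end JointOfChannel

theorem EMD_le_ofReal_Dc {PX : X → ℝ} {W : X → Y → ℝ} {R τ : ℝ} {Q : X → Y → ℝ}
    (hQ : IsJointPmf Q) (hQX : margX Q = PX) (hlam : lam PX W R Q < τ) :
    EMD PX W R τ ≤ ENNReal.ofReal (Dc PX W Q) :=
  biInf_le (fun Q => ENNReal.ofReal (Dc PX W Q)) ⟨hQ, hQX, hlam⟩

theorem EMD_zero_above_tau_star_general
    (PX : X → ℝ) (W : X → Y → ℝ)
    (hPX : IsPmf PX)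
    (hW : IsChannel W)
    (R : ℝ) :
    ∀ τ : ℝ, max (MI (fun x y => PX x * W x y) - R) 0 < τ →
      EMD PX W R τ = 0 := by
  intro τ hτ
  refine le_antisymm ?_ zero_le
  calc EMD PX W R τ
      ≤ ENNReal.ofReal (Dc PX W (fun x y => PX x * W x y)) :=
        EMD_le_ofReal_Dc (isJointPmf_mul_channel hPX hW) (margX_mul_channel hW)
          ((lam_mul_channel R).trans_lt hτ)
    _ = 0 := by rw [Dc_mul_channel, ENNReal.ofReal_zero]

/-- for every `τ > τ*(R) = [I(X;Y) − R]₊`, `E_MD(τ,R) = 0`. -/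
theorem EMD_zero_above_tau_star
    (PX : X → ℝ) (W : X → Y → ℝ)
    (hPX : IsPmf PX) (hPXpos : ∀ x, 0 < PX x)
    (hW : IsChannel W) (hWpos : ∀ x y, 0 < W x y)
    (R : ℝ) (hR : 0 ≤ R) :
    ∀ τ : ℝ, max (MI (fun x y => PX x * W x y) - R) 0 < τ →
      EMD PX W R τ = 0 :=
  EMD_zero_above_tau_star_general PX W hPX hW R
end
end

section
/- Assume W(y|x) > 0 for all x,y and P_X(x) > 0 for all x. For every τ < τ*(R) := max(I(X;Y)−R, 0), E_MD(τ,R) > 0; i.e., inf{ D(Q_{Y|X}‖W|P_X) : Q_X = P_X, λ(Q,R) < τ } is strictly positive. (Proof idea: the only Q with conditional divergence zero is P_X⊗W, which has λ = τ*(R) > τ; by continuity and compactness, all Q with λ(Q,R) < τ are bounded away from P_X⊗W in conditional divergence.) -/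
/-!
The conditional divergence `D_c` vanishes on a joint pmf with input marginal `P_X` only at
`P_X ⊗ W` (Gibbs' inequality), where `λ = [I(X;Y) − R]₊ = τ*(R) > τ`. The set of such pmfs with
`λ ≤ τ` is compact, since `λ` is continuous on nonnegative arrays once `I(X;Y)` is written as
`H(X) + H(Y) − H(X,Y)`; so the continuous function `D_c`, positive on that set, is bounded below
there by some `δ > 0`, and `E_MD(τ,R) ≥ δ`.
-/

open scoped BigOperators ENNReal
open Finset

noncomputable section

variable {X Y : Type*} [Fintype X] [Fintype Y]

open Real InformationTheory

section Divergence

variable {Z : Type*} [Fintype Z]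

/-- This includes `c = 0`, where `t / 0 = 0` makes the function vanish. -/
theorem continuous_mul_log_div (c : ℝ) : Continuous fun t : ℝ => t * log (t / c) := by
  rcases eq_or_ne c 0 with rfl | hc
  · simp only [div_zero, log_zero, mul_zero]
    exact continuous_const
  · have h : (fun t : ℝ => t * log (t / c)) = fun t => c * ((t / c) * log (t / c)) := by
      funext t
      field_simp
    rw [h]
    exact continuous_const.mul (continuous_mul_log.comp (continuous_id.div_const c))

theorem mul_log_div_self (t : ℝ) : t * log (t / t) = 0 := by
  rcases eq_or_ne t 0 with rfl | ht
  · simp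
  · rw [div_self ht, log_one, mul_zero]

theorem sum_mul_log_div_eq_sum_mul_klFun {p q : Z → ℝ} (hq : ∀ z, 0 < q z)
    (hpq : ∑ z, p z = ∑ z, q z) :
    ∑ z, p z * log (p z / q z) = ∑ z, q z * klFun (p z / q z) := by
  have hterm : ∀ z, q z * klFun (p z / q z) = p z * log (p z / q z) + (q z - p z) := by
    intro z
    have := (hq z).ne'
    rw [klFun_apply]
    field_simp
    ring
  simp only [hterm, sum_add_distrib, sum_sub_distrib, hpq, sub_self, add_zero]

theorem sum_mul_log_div_nonneg {p q : Z → ℝ} (hp : ∀ z, 0 ≤ p z) (hq : ∀ z, 0 < q z)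
    (hpq : ∑ z, p z = ∑ z, q z) : 0 ≤ ∑ z, p z * log (p z / q z) := by
  rw [sum_mul_log_div_eq_sum_mul_klFun hq hpq]
  exact sum_nonneg fun z _ => mul_nonneg (hq z).le (klFun_nonneg (div_nonneg (hp z) (hq z).le))

theorem eq_of_sum_mul_log_div_eq_zero {p q : Z → ℝ} (hp : ∀ z, 0 ≤ p z) (hq : ∀ z, 0 < q z)
    (hpq : ∑ z, p z = ∑ z, q z) (h : ∑ z, p z * log (p z / q z) = 0) : p = q := by
  rw [sum_mul_log_div_eq_sum_mul_klFun hq hpq] at h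
  have hnonneg : ∀ z ∈ univ, 0 ≤ q z * klFun (p z / q z) := fun z _ =>
    mul_nonneg (hq z).le (klFun_nonneg (div_nonneg (hp z) (hq z).le))
  funext z
  have hz := (sum_eq_zero_iff_of_nonneg hnonneg).1 h z (mem_univ z)
  rw [mul_eq_zero, klFun_eq_zero_iff (div_nonneg (hp z) (hq z).le),
    div_eq_one_iff_eq (hq z).ne'] at hz
  exact hz.resolve_left (hq z).ne'

end Divergence

/-- The joint law `P_X ⊗ W` of channel input and output. -/
def compProd (PX : X → ℝ) (W : X → Y → ℝ) (x : X) (y : Y) : ℝ := PX x * W x y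

@[fun_prop]
theorem Continuous.mul_log_div {α : Type*} [TopologicalSpace α] {f : α → ℝ} (hf : Continuous f)
    (c : ℝ) : Continuous fun a => f a * Real.log (f a / c) :=
  (continuous_mul_log_div c).comp hf

theorem continuous_Dc (PX : X → ℝ) (W : X → Y → ℝ) : Continuous (Dc PX W) := by
  unfold Dc
  fun_prop

theorem continuous_Dm (PX : X → ℝ) (W : X → Y → ℝ) : Continuous (Dm PX W) := by
  unfold Dm margY
  fun_prop

theorem MI_eq_sum_negMulLog {Q : X → Y → ℝ} (hQ : ∀ x y, 0 ≤ Q x y) :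
    MI Q = ∑ x, negMulLog (margX Q x) + ∑ y, negMulLog (margY Q y)
      - ∑ x, ∑ y, negMulLog (Q x y) := by
  have hterm : ∀ x y, Q x y * log (Q x y / (margX Q x * margY Q y)) =
      Q x y * log (margX Q x)⁻¹ + Q x y * log (margY Q y)⁻¹ - negMulLog (Q x y) := by
    intro x y
    rcases (hQ x y).eq_or_lt with h | h
    · simp [← h]
    have hx : 0 < margX Q x := h.trans_le (single_le_sum (fun i _ => hQ x i) (mem_univ y))
    have hy : 0 < margY Q y := h.trans_le (single_le_sum (fun i _ => hQ i y) (mem_univ x))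
    rw [log_div h.ne' (by positivity), log_mul hx.ne' hy.ne', log_inv, log_inv, negMulLog]
    ring
  have hnegMulLog (t : ℝ) : t * log t⁻¹ = negMulLog t := by rw [log_inv, negMulLog]; ring
  simp only [MI, hterm, sum_add_distrib, sum_sub_distrib]
  rw [sum_comm (f := fun x y => Q x y * log (margY Q y)⁻¹)]
  simp only [← sum_mul, ← margX.eq_1, ← margY.eq_1, hnegMulLog]

theorem continuousOn_MI : ContinuousOn (MI : (X → Y → ℝ) → ℝ) {Q | ∀ x y, 0 ≤ Q x y} := by
  refine ContinuousOn.congr ?_ fun Q hQ => MI_eq_sum_negMulLog hQ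
  refine Continuous.continuousOn ?_
  unfold margX margY
  fun_prop

theorem continuousOn_lam (PX : X → ℝ) (W : X → Y → ℝ) (R : ℝ) :
    ContinuousOn (lam PX W R) {Q | ∀ x y, 0 ≤ Q x y} :=
  ((continuous_Dm PX W).sub (continuous_Dc PX W)).continuousOn.add
    (ContinuousOn.sup (continuousOn_MI.sub continuousOn_const) continuousOn_const)

theorem isCompact_setOf_isJointPmf : IsCompact {Q : X → Y → ℝ | IsJointPmf Q} := by
  have h : {Q : X → Y → ℝ | IsJointPmf Q} = Function.curry '' stdSimplex ℝ (X × Y) := by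
    ext Q
    constructor
    · intro hQ
      exact ⟨Function.uncurry Q, ⟨fun z => hQ.1 z.1 z.2, by rw [Fintype.sum_prod_type]; exact hQ.2⟩,
        rfl⟩
    · rintro ⟨q, ⟨hq_nonneg, hq_sum⟩, rfl⟩
      exact ⟨fun x y => hq_nonneg (x, y), by rw [← hq_sum, Fintype.sum_prod_type]; rfl⟩
  rw [h]
  exact (isCompact_stdSimplex ℝ _).image
    (continuous_pi fun x => continuous_pi fun y => continuous_apply (x, y))

theorem isCompact_setOf_lam_le (PX : X → ℝ) (W : X → Y → ℝ) (R τ : ℝ) :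
    IsCompact ({Q | IsJointPmf Q ∧ margX Q = PX} ∩ lam PX W R ⁻¹' Set.Iic τ) := by
  have hA : IsCompact {Q : X → Y → ℝ | IsJointPmf Q ∧ margX Q = PX} :=
    isCompact_setOf_isJointPmf.inter_right
      (isClosed_eq (by unfold margX; fun_prop) continuous_const)
  refine hA.of_isClosed_subset ?_ Set.inter_subset_left
  exact ((continuousOn_lam PX W R).mono fun Q hQ => hQ.1.1).preimage_isClosed_of_isClosed
    hA.isClosed isClosed_Iic

section Channel

variable {PX : X → ℝ} {W : X → Y → ℝ}

theorem isJointPmf_compProd (hPX : IsPmf PX) (hW : IsChannel W) : IsJointPmf (compProd PX W) := by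
  refine ⟨fun x y => mul_nonneg (hPX.1 x) ((hW x).1 y), ?_⟩
  simp only [compProd, ← mul_sum, fun x => (hW x).2, mul_one, hPX.2]

theorem Dc_compProd : Dc PX W (compProd PX W) = 0 := by
  simp only [Dc, compProd, mul_log_div_self, sum_const_zero]

theorem Dm_compProd : Dm PX W (compProd PX W) = 0 := by
  simp only [Dm, margY, compProd, ← outP.eq_1, mul_log_div_self, sum_const_zero]

theorem lam_compProd (R : ℝ) : lam PX W R (compProd PX W) = max (MI (compProd PX W) - R) 0 := by
  rw [lam, Dm_compProd, Dc_compProd, sub_zero, zero_add]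

theorem Dc_eq_sum_prod (Q : X → Y → ℝ) :
    Dc PX W Q = ∑ z : X × Y, Q z.1 z.2 * log (Q z.1 z.2 / compProd PX W z.1 z.2) :=
  (Fintype.sum_prod_type' _).symm

theorem IsJointPmf.sum_prod_eq {Q Q' : X → Y → ℝ} (hQ : IsJointPmf Q) (hQ' : IsJointPmf Q') :
    ∑ z : X × Y, Q z.1 z.2 = ∑ z : X × Y, Q' z.1 z.2 := by
  rw [Fintype.sum_prod_type', Fintype.sum_prod_type', hQ.2, hQ'.2]

theorem Dc_nonneg (hPX : IsPmf PX) (hPXpos : ∀ x, 0 < PX x) (hW : IsChannel W)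
    (hWpos : ∀ x y, 0 < W x y) {Q : X → Y → ℝ} (hQ : IsJointPmf Q) : 0 ≤ Dc PX W Q := by
  rw [Dc_eq_sum_prod]
  exact sum_mul_log_div_nonneg (fun z => hQ.1 z.1 z.2)
    (fun z => mul_pos (hPXpos z.1) (hWpos z.1 z.2)) (hQ.sum_prod_eq (isJointPmf_compProd hPX hW))

theorem eq_compProd_of_Dc_eq_zero (hPX : IsPmf PX) (hPXpos : ∀ x, 0 < PX x) (hW : IsChannel W)
    (hWpos : ∀ x y, 0 < W x y) {Q : X → Y → ℝ} (hQ : IsJointPmf Q) (h : Dc PX W Q = 0) :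
    Q = compProd PX W := by
  rw [Dc_eq_sum_prod] at h
  have := eq_of_sum_mul_log_div_eq_zero (fun z : X × Y => hQ.1 z.1 z.2)
    (fun z => mul_pos (hPXpos z.1) (hWpos z.1 z.2)) (hQ.sum_prod_eq (isJointPmf_compProd hPX hW)) h
  funext x y
  exact congrFun this (x, y)

end Channel

theorem EMD_pos_below_tau_star_general
    (PX : X → ℝ) (W : X → Y → ℝ)
    (hPX : IsPmf PX) (hPXpos : ∀ x, 0 < PX x)
    (hW : IsChannel W) (hWpos : ∀ x y, 0 < W x y)
    (R : ℝ) :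
    ∀ τ : ℝ, τ < max (MI (fun x y => PX x * W x y) - R) 0 →
      0 < EMD PX W R τ := by
  intro τ hτ
  have hDc_pos : ∀ Q ∈ {Q | IsJointPmf Q ∧ margX Q = PX} ∩ lam PX W R ⁻¹' Set.Iic τ,
      0 < Dc PX W Q := by
    rintro Q ⟨⟨hQ, -⟩, hlam⟩
    refine (Dc_nonneg hPX hPXpos hW hWpos hQ).lt_of_ne fun hDc => ?_
    rw [eq_compProd_of_Dc_eq_zero hPX hPXpos hW hWpos hQ hDc.symm, Set.mem_preimage,
      lam_compProd] at hlam
    exact hlam.not_gt hτ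
  obtain ⟨δ, hδ, hδ_le⟩ :=
    (isCompact_setOf_lam_le PX W R τ).exists_forall_le' (continuous_Dc PX W).continuousOn hDc_pos
  refine (ENNReal.ofReal_pos.2 hδ).trans_le (le_iInf₂ fun Q hQ => ?_)
  exact ENNReal.ofReal_le_ofReal (hδ_le Q ⟨⟨hQ.1, hQ.2.1⟩, hQ.2.2.le⟩)

/-- for every `τ < τ*(R) = [I(X;Y) − R]₊`, `E_MD(τ,R) > 0`. -/
theorem EMD_pos_below_tau_star
    (PX : X → ℝ) (W : X → Y → ℝ)
    (hPX : IsPmf PX) (hPXpos : ∀ x, 0 < PX x)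
    (hW : IsChannel W) (hWpos : ∀ x y, 0 < W x y)
    (R : ℝ) (hR : 0 ≤ R) :
    ∀ τ : ℝ, τ < max (MI (fun x y => PX x * W x y) - R) 0 →
      0 < EMD PX W R τ :=
  EMD_pos_below_tau_star_general PX W hPX hPXpos hW hWpos R
end
end
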